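/- In the setting of the censored GPD Tobit model with z = 1 + ξT_u/σ, the Fisher information cross term E[-∂²l(ξ,σ)/∂σ∂ξ] equals 1/((1+ξ)(1+2ξ)σ) + z^{-2-1/ξ}/((1+ξ)(1+2ξ)ξ²σ) · { -(1+ξ)² + (1 - 2z)(1+ξ)(1+2ξ) + z(2+ξ)(1+2ξ) }. -/

import Mathlib

open MeasureTheory

/-- GPD CDF. -/
noncomputable def gpdCDF (ξ σ y : ℝ) : ℝ := 1 - (1 + ξ * y / σ) ^ (-1/ξ)

/-- GPD density. -/
noncomputable def gpdPDF (ξ σ y : ℝ) : ℝ := σ⁻¹ * (1 + ξ * y / σ) ^ (-1 - 1/ξ)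

/-- Censored (Tobit) GPD log-likelihood. -/
noncomputable def cll (Tu ξ σ y : ℝ) : ℝ :=
  if Tu < y then Real.log (1 - gpdCDF ξ σ Tu) else Real.log (gpdPDF ξ σ y)

/-!
On `{Y > T_u}` the log-likelihood is `-(1/ξ) log z`, on `{Y ≤ T_u}` it is
`-log σ - (1 + 1/ξ) log (1 + ξ y / σ)`; both are `φ(ξ) log (1 + ξ y / σ)` up to a term free of `ξ`,
whose mixed partial derivative is elementary. The expectation then splits into the censored part,
a constant times `P(Y > T_u) = z^(-1/ξ)`, and an integral over `[0, T_u]` which, in the variable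
`u = 1 + ξ y / σ`, is a combination of the powers `u^(-1-1/ξ)`, `u^(-2-1/ξ)`, `u^(-3-1/ξ)` and so
has an explicit primitive.
-/

open Real Set Filter Topology

lemma hasDerivAt_log_one_add_mul_div_left {s y t : ℝ} (hs : s ≠ 0) (ht : 0 < 1 + t * y / s) :
    HasDerivAt (fun t => log (1 + t * y / s)) (y / (s + t * y)) t := by
  have hlin : HasDerivAt (fun t => 1 + t * y / s) (y / s) t := by
    simpa using (((hasDerivAt_id t).mul_const y).div_const s).const_add 1
  convert hlin.log ht.ne' using 1
  field_simp

lemma hasDerivAt_log_one_add_mul_div_right {t y s : ℝ} (hs : s ≠ 0) (hts : 0 < 1 + t * y / s) :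
    HasDerivAt (fun s => log (1 + t * y / s)) (-(t * y) / (s * (s + t * y))) s := by
  have hlin : HasDerivAt (fun s => 1 + t * y / s) (-(t * y) / s ^ 2) s := by
    simpa [div_eq_mul_inv] using ((hasDerivAt_inv hs).const_mul (t * y)).const_add 1
  convert hlin.log hts.ne' using 1
  field_simp

lemma hasDerivAt_div_add_mul {t y s : ℝ} (hs : s + t * y ≠ 0) :
    HasDerivAt (fun s => y / (s + t * y)) (-y / (s + t * y) ^ 2) s := by
  have h := (hasDerivAt_const s y).fun_div ((hasDerivAt_id' s).add_const (t * y)) hs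
  rwa [zero_mul, zero_sub, mul_one] at h

lemma deriv_deriv_mul_log_one_add_mul_div {φ : ℝ → ℝ} {φ' ξ σ y : ℝ} (hφ : HasDerivAt φ φ' ξ)
    (hξ : 0 ≤ ξ) (hσ : 0 < σ) (hy : 0 ≤ y) :
    deriv (fun s => deriv (fun t => φ t * log (1 + t * y / s)) ξ) σ
      = φ' * (-(ξ * y) / (σ * (σ + ξ * y))) + φ ξ * (-y / (σ + ξ * y) ^ 2) := by
  have hinner : ∀ s > 0, deriv (fun t => φ t * log (1 + t * y / s)) ξ
      = φ' * log (1 + ξ * y / s) + φ ξ * (y / (s + ξ * y)) := fun s hs =>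
    (hφ.mul (hasDerivAt_log_one_add_mul_div_left hs.ne' (by positivity))).deriv
  rw [Filter.EventuallyEq.deriv_eq (eventually_gt_nhds hσ |>.mono hinner)]
  exact ((hasDerivAt_log_one_add_mul_div_right hσ.ne' (by positivity)).const_mul φ' |>.add
    ((hasDerivAt_div_add_mul (by positivity)).const_mul (φ ξ))).deriv

lemma deriv_deriv_congr_of_mem_nhds {F G : ℝ → ℝ → ℝ} {ξ σ : ℝ} {U V : Set ℝ}
    (hU : U ∈ 𝓝 ξ) (hV : V ∈ 𝓝 σ) (hFG : ∀ s ∈ V, ∀ t ∈ U, F t s = G t s) :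
    deriv (fun s => deriv (fun t => F t s) ξ) σ = deriv (fun s => deriv (fun t => G t s) ξ) σ :=
  Filter.EventuallyEq.deriv_eq <| Filter.mem_of_superset hV fun s hs =>
    Filter.EventuallyEq.deriv_eq <| Filter.mem_of_superset hU fun t ht => hFG s hs t ht

lemma cll_of_lt {Tu t s y : ℝ} (hTu : 0 ≤ Tu) (ht : 0 < t) (hs : 0 < s) (hy : Tu < y) :
    cll Tu t s y = -1 / t * log (1 + t * Tu / s) := by
  rw [cll, if_pos hy, gpdCDF, sub_sub_cancel, log_rpow (by positivity)]

lemma cll_of_le {Tu t s y : ℝ} (ht : 0 < t) (hs : 0 < s) (hy₀ : 0 ≤ y) (hy : y ≤ Tu) :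
    cll Tu t s y = log s⁻¹ + (-1 - 1 / t) * log (1 + t * y / s) := by
  have hz : 0 < 1 + t * y / s := by positivity
  rw [cll, if_neg hy.not_gt, gpdPDF, log_mul (by positivity) (rpow_pos_of_pos hz _).ne',
    log_rpow hz]

lemma hasDerivAt_neg_one_div {ξ : ℝ} (hξ : ξ ≠ 0) :
    HasDerivAt (fun t => -1 / t) (ξ ^ 2)⁻¹ ξ := by
  simpa [neg_div, one_div] using (hasDerivAt_inv hξ).fun_neg

noncomputable def gpdCrossInfo (ξ σ y : ℝ) : ℝ :=
  y / (ξ * σ * (σ + ξ * y)) - (1 + 1 / ξ) * y / (σ + ξ * y) ^ 2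

lemma neg_deriv_deriv_cll_of_lt {Tu ξ σ y : ℝ} (hTu : 0 ≤ Tu) (hξ : 0 < ξ) (hσ : 0 < σ)
    (hy : Tu < y) :
    -deriv (fun s => deriv (fun t => cll Tu t s y) ξ) σ = Tu ^ 2 / (σ * (σ + ξ * Tu) ^ 2) := by
  rw [deriv_deriv_congr_of_mem_nhds (Ioi_mem_nhds hξ) (Ioi_mem_nhds hσ)
      fun s hs t ht => cll_of_lt hTu ht hs hy,
    deriv_deriv_mul_log_one_add_mul_div (hasDerivAt_neg_one_div hξ.ne') hξ.le hσ hTu]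
  field_simp
  ring

lemma neg_deriv_deriv_cll_of_le {Tu ξ σ y : ℝ} (hξ : 0 < ξ) (hσ : 0 < σ) (hy₀ : 0 ≤ y)
    (hy : y ≤ Tu) :
    -deriv (fun s => deriv (fun t => cll Tu t s y) ξ) σ = gpdCrossInfo ξ σ y := by
  have hφ : HasDerivAt (fun t => -1 - 1 / t) (ξ ^ 2)⁻¹ ξ := by
    simpa [sub_eq_add_neg, neg_div] using (hasDerivAt_neg_one_div hξ.ne').const_add (-1)
  rw [deriv_deriv_congr_of_mem_nhds (Ioi_mem_nhds hξ) (Ioi_mem_nhds hσ)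
      fun s hs t ht => cll_of_le ht hs hy₀ hy]
  simp only [deriv_const_add]
  rw [deriv_deriv_mul_log_one_add_mul_div hφ hξ.le hσ hy₀, gpdCrossInfo]
  field_simp
  ring

lemma hasDerivAt_one_add_mul_div_rpow {ξ σ x : ℝ} (p : ℝ) (hx : 0 < 1 + ξ * x / σ) :
    HasDerivAt (fun y => (1 + ξ * y / σ) ^ p) (ξ / σ * p * (1 + ξ * x / σ) ^ (p - 1)) x := by
  have hlin : HasDerivAt (fun y => 1 + ξ * y / σ) (ξ / σ) x := by
    simpa using (((hasDerivAt_id x).const_mul ξ).div_const σ).const_add 1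
  exact hlin.rpow_const (Or.inl hx.ne')

lemma hasDerivAt_gpdCDF {ξ σ x : ℝ} (hξ : ξ ≠ 0) (hx : 0 < 1 + ξ * x / σ) :
    HasDerivAt (gpdCDF ξ σ) (gpdPDF ξ σ x) x := by
  refine ((hasDerivAt_one_add_mul_div_rpow (-1 / ξ) hx).const_sub 1).congr_deriv ?_
  rw [gpdPDF, show -1 / ξ - 1 = -1 - 1 / ξ by ring]
  field_simp

lemma gpdPDF_nonneg {ξ σ x : ℝ} (hσ : 0 ≤ σ) (hx : 0 ≤ 1 + ξ * x / σ) : 0 ≤ gpdPDF ξ σ x :=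
  mul_nonneg (inv_nonneg.2 hσ) (rpow_nonneg hx _)

lemma tendsto_gpdCDF_atTop {ξ σ : ℝ} (hξ : 0 < ξ) (hσ : 0 < σ) :
    Tendsto (gpdCDF ξ σ) atTop (𝓝 1) := by
  have hlin : Tendsto (fun y => 1 + ξ * y / σ) atTop atTop :=
    tendsto_atTop_add_const_left _ _ ((tendsto_id.const_mul_atTop hξ).atTop_div_const hσ)
  have hpow : Tendsto (fun u : ℝ => u ^ (-1 / ξ)) atTop (𝓝 0) := by
    simpa [neg_div] using tendsto_rpow_neg_atTop (one_div_pos.2 hξ)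
  have h := (hpow.comp hlin).const_sub 1
  rwa [sub_zero] at h

lemma integrableOn_Ioi_gpdPDF {ξ σ x : ℝ} (hξ : 0 < ξ) (hσ : 0 < σ) (hx : 0 ≤ x) :
    IntegrableOn (gpdPDF ξ σ) (Ioi x) :=
  integrableOn_Ioi_deriv_of_nonneg'
    (fun y hy => hasDerivAt_gpdCDF hξ.ne' (by have : 0 ≤ y := hx.trans hy; positivity))
    (fun y hy => gpdPDF_nonneg hσ.le (by have : 0 ≤ y := hx.trans hy.le; positivity))
    (tendsto_gpdCDF_atTop hξ hσ)

lemma integral_Ioi_gpdPDF {ξ σ x : ℝ} (hξ : 0 < ξ) (hσ : 0 < σ) (hx : 0 ≤ x) :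
    ∫ y in Ioi x, gpdPDF ξ σ y = 1 - gpdCDF ξ σ x :=
  integral_Ioi_of_hasDerivAt_of_nonneg'
    (fun y hy => hasDerivAt_gpdCDF hξ.ne' (by have : 0 ≤ y := hx.trans hy; positivity))
    (fun y hy => gpdPDF_nonneg hσ.le (by have : 0 ≤ y := hx.trans hy.le; positivity))
    (tendsto_gpdCDF_atTop hξ hσ)

-- In `u = 1 + ξ y / σ`, `gpdCrossInfo ξ σ y * gpdPDF ξ σ y dy` is
-- `(u^(-1-1/ξ) - (2 + ξ) u^(-2-1/ξ) + (1 + ξ) u^(-3-1/ξ)) du / (ξ ^ 3 * σ)`.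
noncomputable def gpdCrossInfoPrimitive (ξ σ y : ℝ) : ℝ :=
  (-(1 + ξ * y / σ) ^ (-1 / ξ) + (2 + ξ) / (1 + ξ) * (1 + ξ * y / σ) ^ (-1 - 1 / ξ)
    - (1 + ξ) / (1 + 2 * ξ) * (1 + ξ * y / σ) ^ (-2 - 1 / ξ)) / (ξ ^ 2 * σ)

lemma hasDerivAt_gpdCrossInfoPrimitive {ξ σ x : ℝ} (hξ : 0 < ξ) (hσ : 0 < σ) (hx : 0 ≤ x) :
    HasDerivAt (gpdCrossInfoPrimitive ξ σ) (gpdCrossInfo ξ σ x * gpdPDF ξ σ x) x := by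
  have hu : 0 < 1 + ξ * x / σ := by positivity
  have hσx : σ + ξ * x ≠ 0 := by positivity
  have h1ξ : 1 + ξ ≠ 0 := by positivity
  have h2ξ : 1 + 2 * ξ ≠ 0 := by positivity
  refine ((((hasDerivAt_one_add_mul_div_rpow (-1 / ξ) hu).fun_neg.fun_add
    ((hasDerivAt_one_add_mul_div_rpow (-1 - 1 / ξ) hu).const_mul ((2 + ξ) / (1 + ξ)))).fun_sub
    ((hasDerivAt_one_add_mul_div_rpow (-2 - 1 / ξ) hu).const_mul ((1 + ξ) / (1 + 2 * ξ)))).div_const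
    (ξ ^ 2 * σ)).congr_deriv ?_
  rw [show -1 / ξ - 1 = -1 - 1 / ξ by ring, show -2 - 1 / ξ - 1 = -1 - 1 / ξ - 1 - 1 by ring,
    rpow_sub_one hu.ne', rpow_sub_one hu.ne', rpow_sub_one hu.ne', gpdCrossInfo, gpdPDF]
  generalize (1 + ξ * x / σ) ^ (-1 - 1 / ξ) = Q
  field_simp
  ring

lemma continuousOn_gpdCrossInfo_mul_gpdPDF {ξ σ : ℝ} (hξ : 0 < ξ) (hσ : 0 < σ) :
    ContinuousOn (fun y => gpdCrossInfo ξ σ y * gpdPDF ξ σ y) (Ici 0) := by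
  intro x (hx : 0 ≤ x)
  unfold gpdCrossInfo gpdPDF
  exact ContinuousAt.continuousWithinAt
    (by fun_prop (disch := first | positivity | left; positivity))

lemma integral_gpdCrossInfo_mul_gpdPDF {ξ σ a b : ℝ} (hξ : 0 < ξ) (hσ : 0 < σ) (ha : 0 ≤ a)
    (hb : 0 ≤ b) :
    ∫ y in a..b, gpdCrossInfo ξ σ y * gpdPDF ξ σ y
      = gpdCrossInfoPrimitive ξ σ b - gpdCrossInfoPrimitive ξ σ a := by
  have hsub : uIcc a b ⊆ Ici 0 := fun x hx => (le_inf ha hb).trans hx.1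
  exact intervalIntegral.integral_eq_sub_of_hasDerivAt
    (fun x hx => hasDerivAt_gpdCrossInfoPrimitive hξ hσ (hsub hx))
    ((continuousOn_gpdCrossInfo_mul_gpdPDF hξ hσ).mono hsub).intervalIntegrable

lemma gpdCrossInfoPrimitive_sub_add_tail {ξ σ Tu : ℝ} (hξ : 0 < ξ) (hσ : 0 < σ) (hTu : 0 ≤ Tu) :
    gpdCrossInfoPrimitive ξ σ Tu - gpdCrossInfoPrimitive ξ σ 0
        + Tu ^ 2 / (σ * (σ + ξ * Tu) ^ 2) * (1 - gpdCDF ξ σ Tu)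
      = 1 / ((1 + ξ) * (1 + 2*ξ) * σ) +
        (1 + ξ * Tu / σ) ^ (-2 - 1/ξ) / ((1 + ξ) * (1 + 2*ξ) * ξ^2 * σ) *
          (-(1 + ξ)^2 + (1 - 2*(1 + ξ * Tu / σ)) * (1 + ξ) * (1 + 2*ξ)
            + (1 + ξ * Tu / σ) * (2 + ξ) * (1 + 2*ξ)) := by
  have hz : 0 < 1 + ξ * Tu / σ := by positivity
  have hσz : σ + ξ * Tu ≠ 0 := by positivity
  have h1ξ : 1 + ξ ≠ 0 := by positivity
  have h2ξ : 1 + 2 * ξ ≠ 0 := by positivity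
  rw [gpdCrossInfoPrimitive, gpdCrossInfoPrimitive, gpdCDF, sub_sub_cancel,
    show -1 - 1 / ξ = -2 - 1 / ξ + 1 by ring, show -1 / ξ = -2 - 1 / ξ + 1 + 1 by ring,
    rpow_add_one hz.ne', rpow_add_one hz.ne']
  simp only [mul_zero, zero_div, add_zero, one_rpow, mul_one]
  generalize (1 + ξ * Tu / σ) ^ (-2 - 1 / ξ) = Q
  field_simp
  ring

/-- With z = 1 + ξT_u/σ, the Fisher information cross term
E[-∂²l/∂σ∂ξ] equals
1/((1+ξ)(1+2ξ)σ) + z^{-2-1/ξ}/((1+ξ)(1+2ξ)ξ²σ)·{-(1+ξ)²+(1-2z)(1+ξ)(1+2ξ)+z(2+ξ)(1+2ξ)}. -/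
theorem censored_gpd_fisher_cross (ξ σ Tu : ℝ) (hξ : 0 < ξ) (hσ : 0 < σ) (hTu : 0 < Tu) :
    ∫ y in Set.Ioi (0:ℝ),
        (-(deriv (fun s => deriv (fun t => cll Tu t s y) ξ) σ)) * gpdPDF ξ σ y
      = 1 / ((1 + ξ) * (1 + 2*ξ) * σ) +
        (1 + ξ * Tu / σ) ^ (-2 - 1/ξ) / ((1 + ξ) * (1 + 2*ξ) * ξ^2 * σ) *
          (-(1 + ξ)^2 + (1 - 2*(1 + ξ * Tu / σ)) * (1 + ξ) * (1 + 2*ξ)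
            + (1 + ξ * Tu / σ) * (2 + ξ) * (1 + 2*ξ)) := by
  set I := fun y => -deriv (fun s => deriv (fun t => cll Tu t s y) ξ) σ * gpdPDF ξ σ y
  have hbody : EqOn I (fun y => gpdCrossInfo ξ σ y * gpdPDF ξ σ y) (uIcc 0 Tu) := by
    rw [uIcc_of_le hTu.le]
    exact fun y hy => by dsimp only [I]; rw [neg_deriv_deriv_cll_of_le hξ hσ hy.1 hy.2]
  have htail : EqOn I (fun y => Tu ^ 2 / (σ * (σ + ξ * Tu) ^ 2) * gpdPDF ξ σ y) (Ioi Tu) :=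
    fun y hy => by dsimp only [I]; rw [neg_deriv_deriv_cll_of_lt hTu.le hξ hσ hy]
  have hbody_int : IntervalIntegrable I volume 0 Tu :=
    (((continuousOn_gpdCrossInfo_mul_gpdPDF hξ hσ).mono
      (uIcc_of_le hTu.le ▸ Icc_subset_Ici_self)).congr hbody).intervalIntegrable
  have htail_int : IntegrableOn I (Ioi Tu) :=
    IntegrableOn.congr_fun ((integrableOn_Ioi_gpdPDF hξ hσ hTu.le).const_mul _) htail.symm
      measurableSet_Ioi
  rw [← intervalIntegral.integral_interval_add_Ioi' hbody_int htail_int,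
    intervalIntegral.integral_congr hbody, setIntegral_congr_fun measurableSet_Ioi htail,
    integral_gpdCrossInfo_mul_gpdPDF hξ hσ le_rfl hTu.le, integral_const_mul,
    integral_Ioi_gpdPDF hξ hσ hTu.le]
  exact gpdCrossInfoPrimitive_sub_add_tail hξ hσ hTu.le
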